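/- arXiv:1707.04378 — 6 statements merged into one kernel-verified Lean document; each statement's English description precedes it below -/
import Mathlib

section
/- If A and B are elements of a von Neumann algebra R on a Hilbert space H with A*A ≤ λ²·B*B for some λ ≥ 0, then there exists C ∈ R with A = C·B. -/
/-!
The inequality gives `‖A x‖ ≤ λ ‖B x‖`, so `B x ↦ A x` is a well-defined bounded map on the range
of `B`. Extend it continuously to the closure of the range and by zero on `(range B)ᗮ = ker B†`.
If `T` commutes with `A`, `B` and `B†`, then `T C - C T` vanishes on `range B` (as `C B = A`) and
on `ker B†` (which `T` preserves), hence everywhere. So `C` lies in the double commutant `R'' = R`.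
-/

namespace ContinuousLinearMap

variable {𝕜 E F G : Type*} [RCLike 𝕜]
  [NormedAddCommGroup G] [InnerProductSpace 𝕜 G] [CompleteSpace G]

theorem norm_apply_le_of_adjoint_comp_self_le [NormedAddCommGroup E] [InnerProductSpace 𝕜 E]
    [CompleteSpace E] [NormedAddCommGroup F] [InnerProductSpace 𝕜 F] [CompleteSpace F]
    {A : E →L[𝕜] F} {B : E →L[𝕜] G} {l : ℝ} (hl : 0 ≤ l)
    (h : adjoint A ∘L A ≤ ((l ^ 2 : ℝ) : 𝕜) • (adjoint B ∘L B)) (x : E) :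
    ‖A x‖ ≤ l * ‖B x‖ := by
  have hsq : ‖A x‖ ^ 2 ≤ (l * ‖B x‖) ^ 2 := by
    have := ((le_def _ _).mp h).re_inner_nonneg_left x
    rw [sub_apply, inner_sub_left, map_sub, smul_apply, inner_smul_left, RCLike.conj_ofReal,
      RCLike.re_ofReal_mul, ← apply_norm_sq_eq_inner_adjoint_left,
      ← apply_norm_sq_eq_inner_adjoint_left] at this
    linarith [mul_pow l ‖B x‖ 2]
  exact pow_le_pow_iff_left₀ (norm_nonneg _) (by positivity) two_ne_zero |>.mp hsq

theorem exists_comp_eq_and_orthogonal_range_le_ker [NormedAddCommGroup E] [NormedSpace 𝕜 E]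
    [NormedAddCommGroup F] [NormedSpace 𝕜 F] [CompleteSpace F]
    {A : E →L[𝕜] F} {B : E →L[𝕜] G} {l : ℝ} (h : ∀ x, ‖A x‖ ≤ l * ‖B x‖) :
    ∃ C : G →L[𝕜] F, C ∘L B = A ∧ B.rangeᗮ ≤ C.ker := by
  set K := B.range.topologicalClosure
  let e : E →ₗ[𝕜] K := (B : E →ₗ[𝕜] G).codRestrict K
    fun x ↦ B.range.le_topologicalClosure ⟨x, rfl⟩
  have he : DenseRange e := by
    rw [DenseRange, Subtype.dense_iff, ← Set.range_comp]
    exact B.range.topologicalClosure_coe.subset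
  have hAe := LinearMap.extendOfNorm_eq he ⟨l, h⟩
  refine ⟨(A : E →ₗ[𝕜] F).extendOfNorm e ∘L K.orthogonalProjectionOnto, ?_, ?_⟩
  · ext x
    rw [comp_apply, comp_apply, ← coe_coe A, ← hAe x]
    exact congrArg _ (K.orthogonalProjectionOnto_mem_subspace_eq_self (e x))
  · intro w hw
    rw [← B.range.orthogonal_closure] at hw
    rw [LinearMap.mem_ker, coe_coe, comp_apply,
      Submodule.orthogonalProjectionOnto_apply_of_mem_orthogonal (K := K) hw, map_zero]

theorem eq_zero_of_le_ker_of_orthogonal_le_ker [NormedAddCommGroup F] [NormedSpace 𝕜 F]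
    (p : Submodule 𝕜 G) {D : G →L[𝕜] F} (hp : p ≤ D.ker) (hp' : pᗮ ≤ D.ker) : D = 0 := by
  have hclosure : p.topologicalClosure ≤ D.ker :=
    p.topologicalClosure_minimal hp D.isClosed_ker
  rw [← p.orthogonal_closure] at hp'
  ext x
  have hx : x ∈ p.topologicalClosure ⊔ p.topologicalClosureᗮ := by
    rw [Submodule.sup_orthogonal_of_hasOrthogonalProjection]
    trivial
  exact sup_le hclosure hp' hx

theorem commute_of_comp_eq_of_orthogonal_range_le_ker {A B C T : G →L[𝕜] G}
    (hCB : C ∘L B = A) (hC : B.rangeᗮ ≤ C.ker)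
    (hA : Commute A T) (hB : Commute B T) (hB' : Commute (adjoint B) T) : Commute C T := by
  rw [Commute, SemiconjBy, ← sub_eq_zero]
  have hCB' (x : G) : C (B x) = A x := congr($hCB x)
  have hAT (x : G) : A (T x) = T (A x) := congr($hA.eq x)
  have hBT (x : G) : B (T x) = T (B x) := congr($hB.eq x)
  have hB'T (x : G) : adjoint B (T x) = T (adjoint B x) := congr($hB'.eq x)
  have hC' (w : G) (hw : adjoint B w = 0) : C w = 0 := by
    rw [B.orthogonal_range] at hC
    exact hC hw
  refine eq_zero_of_le_ker_of_orthogonal_le_ker B.range ?_ ?_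
  · rintro _ ⟨x, rfl⟩
    show C (T (B x)) - T (C (B x)) = 0
    rw [← hBT, hCB', hCB', hAT, sub_self]
  · intro w hw
    rw [B.orthogonal_range] at hw
    replace hw : adjoint B w = 0 := hw
    have hTw : adjoint B (T w) = 0 := by rw [hB'T, hw, map_zero]
    show C (T w) - T (C w) = 0
    rw [hC' _ hTw, hC' _ hw, map_zero, sub_zero]

end ContinuousLinearMap

open ContinuousLinearMap

variable {H : Type*} [NormedAddCommGroup H] [InnerProductSpace ℂ H] [CompleteSpace H]

theorem douglas_vonNeumann (R : VonNeumannAlgebra H) (A B : H →L[ℂ] H)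
    (hA : A ∈ R) (hB : B ∈ R) (l : ℝ) (hl : 0 ≤ l)
    (h : adjoint A * A ≤ (l ^ 2 : ℝ) • (adjoint B * B)) :
    ∃ C ∈ R, A = C * B := by
  rw [RCLike.real_smul_eq_coe_smul (K := ℂ)] at h
  obtain ⟨C, hCB, hC⟩ := exists_comp_eq_and_orthogonal_range_le_ker
    (norm_apply_le_of_adjoint_comp_self_le hl h)
  refine ⟨C, ?_, hCB.symm⟩
  rw [← R.commutant_commutant, VonNeumannAlgebra.mem_commutant_iff]
  intro T hT
  rw [VonNeumannAlgebra.mem_commutant_iff] at hT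
  have hB' : adjoint B ∈ R := by rw [← star_eq_adjoint]; exact star_mem hB
  exact (commute_of_comp_eq_of_orthogonal_range_le_ker hCB hC (hT A hA) (hT B hB) (hT _ hB')).symm
end

section
/- For A, B in a von Neumann algebra R, the left ideal R·A is contained in R·B if and only if A*A ≤ λ²·B*B for some λ ≥ 0. -/
/-!
Douglas' factorization. If `‖A x‖ ≤ l ‖B x‖` for all `x`, then `B x ↦ A x` is a well-defined
bounded map on the range of `B`; extending it to the closure and by zero on the orthogonal
complement gives `C` with `C B = A`. Every `S` in the commutant `R'` preserves the range of `B` and,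
since `R'` is self-adjoint, also its orthogonal complement, so `C` commutes with `R'` and lies in
`R = R''`. Then `T A = (T C) B`. Conversely, `A = T B` gives `A* A = B* T* T B ≤ ‖T‖² B* B`.
-/

open ContinuousLinearMap

namespace ContinuousLinearMap

section

variable {𝕜 E F G : Type*} [RCLike 𝕜]
  [NormedAddCommGroup E] [InnerProductSpace 𝕜 E] [CompleteSpace E]
  [NormedAddCommGroup F] [InnerProductSpace 𝕜 F] [CompleteSpace F]
  [NormedAddCommGroup G] [InnerProductSpace 𝕜 G] [CompleteSpace G]

theorem adjoint_comp_self_le_smul_iff {l : ℝ} (hl : 0 ≤ l) (A : E →L[𝕜] F) (B : E →L[𝕜] G) :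
    adjoint A ∘L A ≤ ((l ^ 2 : ℝ) : 𝕜) • (adjoint B ∘L B) ↔ ∀ x, ‖A x‖ ≤ l * ‖B x‖ := by
  have hsa : IsSelfAdjoint (((l ^ 2 : ℝ) : 𝕜) • (adjoint B ∘L B) - adjoint A ∘L A) :=
    (IsSelfAdjoint.smul (RCLike.conj_ofReal _) (isPositive_adjoint_comp_self B).isSelfAdjoint).sub
      (isPositive_adjoint_comp_self A).isSelfAdjoint
  have hquad : ∀ x, (((l ^ 2 : ℝ) : 𝕜) • (adjoint B ∘L B) - adjoint A ∘L A).reApplyInnerSelf x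
      = (l * ‖B x‖) ^ 2 - ‖A x‖ ^ 2 := fun x => by
    simp [reApplyInnerSelf_apply, inner_sub_left, inner_smul_left, adjoint_inner_left,
      mul_pow]
  simp only [le_def, isPositive_def', hsa, true_and, hquad, sub_nonneg]
  exact forall_congr' fun x =>
    pow_le_pow_iff_left₀ (norm_nonneg _) (mul_nonneg hl (norm_nonneg _)) two_ne_zero

end

section

variable {𝕜 E F G : Type*} [RCLike 𝕜]
  [NormedAddCommGroup E] [NormedSpace 𝕜 E]
  [NormedAddCommGroup F] [NormedSpace 𝕜 F] [CompleteSpace F]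
  [NormedAddCommGroup G] [InnerProductSpace 𝕜 G] [CompleteSpace G]

theorem exists_comp_eq_of_norm_le_mul_norm (A : E →L[𝕜] F) (B : E →L[𝕜] G) {l : ℝ}
    (h : ∀ x, ‖A x‖ ≤ l * ‖B x‖) :
    ∃ C : G →L[𝕜] F, C ∘L B = A ∧ B.rangeᗮ ≤ C.ker := by
  set K := B.range.topologicalClosure
  let e : E →ₗ[𝕜] K := (B : E →ₗ[𝕜] G).codRestrict K fun x =>
    B.range.le_topologicalClosure ⟨x, rfl⟩
  have he : DenseRange e := by
    rw [DenseRange, Subtype.dense_iff, ← Set.range_comp]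
    exact B.range.topologicalClosure_coe.subset
  have hbound : ∃ c, ∀ x, ‖(A : E →ₗ[𝕜] F) x‖ ≤ c * ‖e x‖ := ⟨l, h⟩
  refine ⟨((A : E →ₗ[𝕜] F).extendOfNorm e).comp K.orthogonalProjectionOnto, ?_, ?_⟩
  · ext x
    have hproj : K.orthogonalProjectionOnto (B x) = e x :=
      K.orthogonalProjectionOnto_mem_subspace_eq_self (e x)
    simp [hproj, LinearMap.extendOfNorm_eq he hbound]
  · intro z hz
    rw [← Submodule.orthogonal_closure] at hz
    have hproj : K.orthogonalProjectionOnto z = 0 :=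
      Submodule.orthogonalProjectionOnto_apply_of_mem_orthogonal hz
    simp [hproj]

end

section

variable {𝕜 E F : Type*} [RCLike 𝕜]
  [NormedAddCommGroup E] [InnerProductSpace 𝕜 E] [CompleteSpace E]
  [NormedAddCommGroup F] [NormedSpace 𝕜 F]

theorem ext_of_mem_and_mem_orthogonal (U : Submodule 𝕜 E) {f g : E →L[𝕜] F}
    (hU : ∀ x ∈ U, f x = g x) (hUperp : ∀ x ∈ Uᗮ, f x = g x) : f = g := by
  set M := (f - g).ker
  have hM : IsClosed (M : Set E) := (f - g).isClosed_ker
  have : CompleteSpace M := hM.completeSpace_coe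
  have hMperp : Mᗮ = ⊥ := by
    refine eq_bot_iff.2 (le_of_le_of_eq (le_inf ?_ ?_) Uᗮ.inf_orthogonal_eq_bot)
    · exact Submodule.orthogonal_le fun x hx => by simp [M, hU x hx]
    · exact Submodule.orthogonal_le fun x hx => by simp [M, hUperp x hx]
  ext x
  have hx : x ∈ M := (Submodule.orthogonal_eq_bot_iff.1 hMperp).symm ▸ Submodule.mem_top
  simpa [M, sub_eq_zero] using hx

end

section

variable {𝕜 E : Type*} [RCLike 𝕜]
  [NormedAddCommGroup E] [InnerProductSpace 𝕜 E] [CompleteSpace E]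

theorem apply_mem_orthogonal_range {S B : E →L[𝕜] E} (h : Commute (adjoint S) B) {z : E}
    (hz : z ∈ B.rangeᗮ) : S z ∈ B.rangeᗮ := by
  refine orthogonal_mem_invtSubmodule ?_ hz
  rw [Module.End.mem_invtSubmodule_iff_forall_mem_of_mem]
  rintro _ ⟨y, rfl⟩
  exact ⟨adjoint S y, by simpa using congr($h.eq y).symm⟩

theorem commute_of_mul_eq {A B C S : E →L[𝕜] E} (hCB : C * B = A) (hC : B.rangeᗮ ≤ C.ker)
    (hSA : Commute S A) (hSB : Commute S B) (hSB' : Commute (adjoint S) B) : Commute S C := by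
  refine ext_of_mem_and_mem_orthogonal B.range ?_ fun z hz => ?_
  · rintro _ ⟨y, rfl⟩
    calc S (C (B y)) = S (A y) := by rw [← hCB]; rfl
      _ = A (S y) := congr($hSA.eq y)
      _ = C (B (S y)) := by rw [← hCB]; rfl
      _ = C (S (B y)) := congr(C ($(hSB.eq) y)).symm
  · have hCz : ∀ z ∈ B.rangeᗮ, C z = 0 := fun z hz => hC hz
    change S (C z) = C (S z)
    rw [hCz z hz, hCz _ (apply_mem_orthogonal_range hSB' hz), map_zero]

end

end ContinuousLinearMap

variable {H : Type*} [NormedAddCommGroup H] [InnerProductSpace ℂ H] [CompleteSpace H]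

theorem VonNeumannAlgebra.mem_of_mul_eq_of_orthogonal_range_le_ker {R : VonNeumannAlgebra H}
    {A B C : H →L[ℂ] H} (hA : A ∈ R) (hB : B ∈ R) (hCB : C * B = A) (hC : B.rangeᗮ ≤ C.ker) :
    C ∈ R := by
  rw [← R.commutant_commutant, mem_commutant_iff]
  intro S hS
  have hcomm : ∀ T ∈ R, Commute S T := fun T hT => (mem_commutant_iff.1 hS T hT).symm
  have hadj : adjoint S ∈ R.commutant := star_eq_adjoint S ▸ star_mem hS
  exact (commute_of_mul_eq hCB hC (hcomm A hA) (hcomm B hB)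
    (mem_commutant_iff.1 hadj B hB).symm).eq

theorem leftIdeal_subset_iff_majorization (R : VonNeumannAlgebra H) (A B : H →L[ℂ] H)
    (hA : A ∈ R) (hB : B ∈ R) :
    (fun T => T * A) '' (R : Set (H →L[ℂ] H)) ⊆ (fun T => T * B) '' (R : Set (H →L[ℂ] H)) ↔
      ∃ l : ℝ, 0 ≤ l ∧ adjoint A * A ≤ (l ^ 2 : ℝ) • (adjoint B * B) := by
  have hmaj : ∀ l : ℝ, 0 ≤ l →
      (adjoint A * A ≤ (l ^ 2 : ℝ) • (adjoint B * B) ↔ ∀ x, ‖A x‖ ≤ l * ‖B x‖) := fun l hl => by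
    rw [← Complex.coe_smul]
    exact adjoint_comp_self_le_smul_iff hl A B
  constructor
  · intro h
    obtain ⟨T, -, hTB⟩ := h ⟨1, R.one_mem, one_mul A⟩
    refine ⟨‖T‖, norm_nonneg T, (hmaj _ (norm_nonneg T)).2 fun x => ?_⟩
    rw [← hTB]
    exact T.le_opNorm (B x)
  · rintro ⟨l, hl, hle⟩
    obtain ⟨C, hCB, hC⟩ := exists_comp_eq_of_norm_le_mul_norm A B ((hmaj l hl).1 hle)
    have hCR : C ∈ R := VonNeumannAlgebra.mem_of_mul_eq_of_orthogonal_range_le_ker hA hB hCB hC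
    rintro _ ⟨T, hT, rfl⟩
    exact ⟨T * C, mul_mem hT hCR, congrArg (T * ·) hCB⟩
end

section
/- For operators A₁, A₂ in a von Neumann algebra R, the sum of principal left ideals satisfies R·A₁ + R·A₂ = R·√(A₁*A₁ + A₂*A₂). Hence every finitely generated left ideal of R is principal. -/
/-!
Put `B = √(A₁† A₁ + A₂† A₂)`, so that `‖A₁ x‖² + ‖A₂ x‖² = ‖B x‖²`. Each `Aᵢ` then factors as
`Aᵢ = Vᵢ B` with `Vᵢ` bounded and vanishing on `(range B)ᗮ = ker B`, and the double commutant
theorem puts `Vᵢ` in `R`; this gives `R·A₁ + R·A₂ ⊆ R·B`. Comparing both sides on `range B` and on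
`ker B` shows `A₁† V₁ + A₂† V₂ = B`, i.e. `B = V₁† A₁ + V₂† A₂`, which is the reverse inclusion.
Induction on the number of generators then makes every finitely generated left ideal principal.
-/

open ContinuousLinearMap Pointwise

set_option synthInstance.maxHeartbeats 1000000
set_option maxHeartbeats 1000000

variable {H : Type*} [NormedAddCommGroup H] [InnerProductSpace ℂ H] [CompleteSpace H]

section LeftMultiples

variable {α σ : Type*} [NonUnitalSemiring α] [SetLike σ α] {s : σ}

theorem image_mul_add_image_mul_eq_image_mul [MulMemClass σ α] [AddMemClass σ α]
    {a₁ a₂ b v₁ v₂ w₁ w₂ : α} (hv₁ : v₁ ∈ s) (hv₂ : v₂ ∈ s) (hw₁ : w₁ ∈ s) (hw₂ : w₂ ∈ s)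
    (h₁ : v₁ * b = a₁) (h₂ : v₂ * b = a₂) (hb : w₁ * a₁ + w₂ * a₂ = b) :
    (· * a₁) '' (s : Set α) + (· * a₂) '' (s : Set α) = (· * b) '' (s : Set α) := by
  apply Set.Subset.antisymm
  · rintro _ ⟨_, ⟨t₁, ht₁, rfl⟩, _, ⟨t₂, ht₂, rfl⟩, rfl⟩
    refine ⟨t₁ * v₁ + t₂ * v₂, add_mem (mul_mem ht₁ hv₁) (mul_mem ht₂ hv₂), ?_⟩
    simp only [add_mul, mul_assoc, h₁, h₂]
  · rintro _ ⟨t, ht, rfl⟩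
    refine ⟨_, ⟨t * w₁, mul_mem ht hw₁, rfl⟩, _, ⟨t * w₂, mul_mem ht hw₂, rfl⟩, ?_⟩
    simp only [mul_assoc, ← mul_add, hb]

theorem exists_sum_image_mul_eq_image_mul [ZeroMemClass σ α]
    (h : ∀ a₁ ∈ s, ∀ a₂ ∈ s, ∃ b ∈ s,
      (· * a₁) '' (s : Set α) + (· * a₂) '' (s : Set α) = (· * b) '' (s : Set α))
    {n : ℕ} (a : Fin n → α) (ha : ∀ i, a i ∈ s) :
    ∃ b ∈ s, ∑ i, (· * a i) '' (s : Set α) = (· * b) '' (s : Set α) := by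
  induction n with
  | zero =>
    refine ⟨0, zero_mem s, ?_⟩
    simp only [Finset.univ_eq_empty, Finset.sum_empty, mul_zero]
    exact (Set.Nonempty.image_const ⟨0, zero_mem s⟩ 0).symm
  | succ n ih =>
    obtain ⟨b, hb, hsum⟩ := ih (fun i => a i.succ) (fun i => ha i.succ)
    obtain ⟨c, hc, hpair⟩ := h (a 0) (ha 0) b hb
    exact ⟨c, hc, by rw [Fin.sum_univ_succ, hsum, hpair]⟩

end LeftMultiples

section Orthogonal

variable {𝕜 E F G : Type*} [RCLike 𝕜] [NormedAddCommGroup E] [InnerProductSpace 𝕜 E]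
  [CompleteSpace E]

theorem Submodule.dense_sup_orthogonal (K : Submodule 𝕜 E) :
    Dense ((K ⊔ Kᗮ : Submodule 𝕜 E) : Set E) := by
  rw [Submodule.dense_iff_topologicalClosure_eq_top, Submodule.topologicalClosure_eq_top_iff,
    ← Submodule.inf_orthogonal, Submodule.inf_orthogonal_eq_bot]

theorem ContinuousLinearMap.ext_on_sup_orthogonal [NormedAddCommGroup F] [NormedSpace 𝕜 F]
    (K : Submodule 𝕜 E) {f g : E →L[𝕜] F} (h : ∀ x ∈ K, f x = g x) (h' : ∀ x ∈ Kᗮ, f x = g x) :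
    f = g := by
  refine ext_on (s := K ∪ Kᗮ) ?_ fun x hx => hx.elim (h x) (h' x)
  rw [Submodule.span_union, Submodule.span_eq, Submodule.span_eq]
  exact K.dense_sup_orthogonal

theorem ContinuousLinearMap.exists_comp_eq_of_norm_le [NormedAddCommGroup F] [NormedSpace 𝕜 F]
    [NormedAddCommGroup G] [NormedSpace 𝕜 G] [CompleteSpace G] {A : F →L[𝕜] G} {B : F →L[𝕜] E}
    (h : ∀ x, ‖A x‖ ≤ ‖B x‖) :
    ∃ V : E →L[𝕜] G, V ∘L B = A ∧ ∀ y ∈ B.rangeᗮ, V y = 0 := by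
  -- `V` extends `B x + y ↦ A x` from the dense subspace `range B + (range B)ᗮ`.
  set D := B.range
  let e : F × Dᗮ →ₗ[𝕜] E := (B : F →ₗ[𝕜] E).coprod Dᗮ.subtype
  let f : F × Dᗮ →ₗ[𝕜] G := (A : F →ₗ[𝕜] G).comp (LinearMap.fst 𝕜 F Dᗮ)
  have hdense : DenseRange e := by
    rw [DenseRange, ← LinearMap.coe_range, LinearMap.range_coprod, Submodule.range_subtype]
    exact D.dense_sup_orthogonal
  have hbound : ∀ p, ‖f p‖ ≤ 1 * ‖e p‖ := by
    rintro ⟨x, y, hy⟩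
    have hxy : inner 𝕜 (B x) y = 0 :=
      Submodule.inner_right_of_mem_orthogonal (LinearMap.mem_range_self _ x) hy
    calc ‖A x‖ ≤ ‖B x‖ := h x
      _ ≤ 1 * ‖B x + y‖ := by
        rw [one_mul, ← sq_le_sq₀ (norm_nonneg _) (norm_nonneg _), @norm_add_sq 𝕜, hxy]
        simp
  refine ⟨f.extendOfNorm e, ?_, fun y hy => ?_⟩
  · ext x
    simpa [e, f] using LinearMap.extendOfNorm_eq hdense ⟨1, hbound⟩ (x, 0)
  · simpa [e, f] using LinearMap.extendOfNorm_eq hdense ⟨1, hbound⟩ (0, ⟨y, hy⟩)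

end Orthogonal

theorem ContinuousLinearMap.norm_sqrt_apply_sq {S : H →L[ℂ] H} (hS : 0 ≤ S) (x : H) :
    ‖CFC.sqrt S x‖ ^ 2 = RCLike.re (inner ℂ (S x) x) := by
  rw [apply_norm_sq_eq_inner_adjoint_left, ← star_eq_adjoint,
    (CFC.sqrt_nonneg S).isSelfAdjoint.star_eq, ← mul_def, CFC.sqrt_mul_sqrt_self S hS]

namespace VonNeumannAlgebra

variable (R : VonNeumannAlgebra H)

theorem mem_of_forall_commute {a : H →L[ℂ] H} (h : ∀ T ∈ R.commutant, Commute a T) : a ∈ R := by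
  rw [← R.commutant_commutant, mem_commutant_iff]
  exact fun T hT => (h T hT).symm.eq

theorem sqrt_mem {a : H →L[ℂ] H} (ha : a ∈ R) : CFC.sqrt a ∈ R :=
  R.mem_of_forall_commute fun T hT => by
    rw [CFC.sqrt_eq_cfc]
    exact (show Commute a T from mem_commutant_iff.1 hT a ha).cfc_nnreal _

theorem mem_of_mul_eq {A B V : H →L[ℂ] H} (hB : IsSelfAdjoint B) (hBR : B ∈ R) (hAR : A ∈ R)
    (hVB : V * B = A) (hV : ∀ y ∈ B.rangeᗮ, V y = 0) : V ∈ R := by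
  refine R.mem_of_forall_commute fun T hT => ext_on_sup_orthogonal B.range ?_ fun y hy => ?_
  · have hTB : B * T = T * B := mem_commutant_iff.1 hT B hBR
    have hTA : A * T = T * A := mem_commutant_iff.1 hT A hAR
    have : V * T * B = T * V * B := by
      rw [mul_assoc, ← hTB, ← mul_assoc, hVB, hTA, mul_assoc, hVB]
    rintro _ ⟨x, rfl⟩
    exact DFunLike.congr_fun this x
  · have hBy : B y = 0 := by rwa [hB.isStarNormal.orthogonal_range, LinearMap.mem_ker] at hy
    have hTy : T y ∈ B.rangeᗮ := by
      rw [hB.isStarNormal.orthogonal_range, LinearMap.mem_ker]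
      calc B (T y) = T (B y) := DFunLike.congr_fun (mem_commutant_iff.1 hT B hBR) y
        _ = 0 := by rw [hBy, map_zero]
    simp [hV y hy, hV _ hTy]

theorem adjoint_mul_self_add_adjoint_mul_self_mem {A₁ A₂ : H →L[ℂ] H} (h₁ : A₁ ∈ R)
    (h₂ : A₂ ∈ R) : adjoint A₁ * A₁ + adjoint A₂ * A₂ ∈ R := by
  simpa only [← star_eq_adjoint] using add_mem (mul_mem (star_mem h₁) h₁) (mul_mem (star_mem h₂) h₂)

theorem image_mul_add_image_mul_eq_image_mul_sqrt {A₁ A₂ : H →L[ℂ] H} (h₁ : A₁ ∈ R)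
    (h₂ : A₂ ∈ R) :
    (· * A₁) '' (R : Set (H →L[ℂ] H)) + (· * A₂) '' (R : Set (H →L[ℂ] H)) =
      (· * CFC.sqrt (adjoint A₁ * A₁ + adjoint A₂ * A₂)) '' (R : Set (H →L[ℂ] H)) := by
  set S := adjoint A₁ * A₁ + adjoint A₂ * A₂
  set B := CFC.sqrt S
  have hS : 0 ≤ S := by
    simpa only [S, ← star_eq_adjoint] using
      add_nonneg (star_mul_self_nonneg A₁) (star_mul_self_nonneg A₂)
  have hBR : B ∈ R := R.sqrt_mem (R.adjoint_mul_self_add_adjoint_mul_self_mem h₁ h₂)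
  have hB : IsSelfAdjoint B := (CFC.sqrt_nonneg S).isSelfAdjoint
  have hnorm (x : H) : ‖A₁ x‖ ^ 2 + ‖A₂ x‖ ^ 2 = ‖B x‖ ^ 2 := by
    rw [norm_sqrt_apply_sq hS, apply_norm_sq_eq_inner_adjoint_left,
      apply_norm_sq_eq_inner_adjoint_left, ← map_add, ← inner_add_left]
    rfl
  obtain ⟨V₁, hV₁B, hV₁⟩ := exists_comp_eq_of_norm_le (A := A₁) (B := B) fun x =>
    (sq_le_sq₀ (norm_nonneg _) (norm_nonneg _)).1
      (by nlinarith [hnorm x, sq_nonneg ‖A₂ x‖])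
  obtain ⟨V₂, hV₂B, hV₂⟩ := exists_comp_eq_of_norm_le (A := A₂) (B := B) fun x =>
    (sq_le_sq₀ (norm_nonneg _) (norm_nonneg _)).1
      (by nlinarith [hnorm x, sq_nonneg ‖A₁ x‖])
  rw [← mul_def] at hV₁B hV₂B
  have hV₁R : V₁ ∈ R := R.mem_of_mul_eq hB hBR h₁ hV₁B hV₁
  have hV₂R : V₂ ∈ R := R.mem_of_mul_eq hB hBR h₂ hV₂B hV₂
  have hW : adjoint A₁ * V₁ + adjoint A₂ * V₂ = B := by
    refine ext_on_sup_orthogonal B.range ?_ fun y hy => ?_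
    · have : (adjoint A₁ * V₁ + adjoint A₂ * V₂) * B = B * B := by
        rw [add_mul, mul_assoc, mul_assoc, hV₁B, hV₂B, CFC.sqrt_mul_sqrt_self S hS]
      rintro _ ⟨x, rfl⟩
      exact DFunLike.congr_fun this x
    · have hBy : B y = 0 := by
        rwa [hB.isStarNormal.orthogonal_range, LinearMap.mem_ker] at hy
      simp [hV₁ y hy, hV₂ y hy, hBy]
  refine image_mul_add_image_mul_eq_image_mul hV₁R hV₂R (star_mem hV₁R) (star_mem hV₂R) hV₁B hV₂B ?_
  simpa [star_add, star_mul, star_eq_adjoint, hB.adjoint_eq] using congr(star $hW)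

end VonNeumannAlgebra

theorem leftIdeal_add_leftIdeal (R : VonNeumannAlgebra H) (A₁ A₂ : H →L[ℂ] H)
    (h₁ : A₁ ∈ R) (h₂ : A₂ ∈ R) :
    ((fun T => T * A₁) '' (R : Set (H →L[ℂ] H)) + (fun T => T * A₂) '' (R : Set (H →L[ℂ] H)) =
      (fun T => T * CFC.sqrt (adjoint A₁ * A₁ + adjoint A₂ * A₂)) '' (R : Set (H →L[ℂ] H))) ∧
    ∀ (n : ℕ) (A : Fin n → H →L[ℂ] H), (∀ i, A i ∈ R) →
      ∃ B ∈ R, (∑ i, (fun T => T * A i) '' (R : Set (H →L[ℂ] H))) =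
        (fun T => T * B) '' (R : Set (H →L[ℂ] H)) :=
  ⟨R.image_mul_add_image_mul_eq_image_mul_sqrt h₁ h₂, fun _ =>
    exists_sum_image_mul_eq_image_mul fun _ ha₁ _ ha₂ =>
      ⟨_, R.sqrt_mem (R.adjoint_mul_self_add_adjoint_mul_self_mem ha₁ ha₂),
        R.image_mul_add_image_mul_eq_image_mul_sqrt ha₁ ha₂⟩⟩
end

section
/- Let X = {0} ∪ {1/n : n ∈ ℕ, n ≥ 1} with the subspace topology from ℝ, let g(x) = x, and let f(x) = x when x = 1/(2n) for some n ≥ 1 and f(x) = 0 otherwise. Then f and g are continuous, f² ≤ g², yet there is no continuous function h : X → ℂ with f = h·g. -/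
/-
Every point `1/n` of `Xset` is isolated, so a function on `Xset` is continuous as soon as it is
continuous at `0`; this gives continuity of `f`, since `|f x| ≤ |x|`. But if `f = h g` then
`h (1/n) = f (1/n) / (1/n)` is `1` for even `n` and `0` for odd `n`, so `h` has no limit at `0`.
-/

open scoped Classical

/-- The compact space `{0} ∪ {1/n : n ≥ 1}` as a subset of `ℝ`. -/
def Xset : Set ℝ := {0} ∪ {x : ℝ | ∃ n : ℕ, 1 ≤ n ∧ x = 1 / n}

open Filter Topology Set

lemma one_div_natCast_mem_Ioo_iff {m n : ℕ} (hm : 1 ≤ m) (hn : 1 ≤ n) :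
    1 / (m : ℝ) ∈ Ioo (1 / ((n : ℝ) + 1 / 2)) (1 / ((n : ℝ) - 1 / 2)) ↔ m = n := by
  have hm' : (1 : ℝ) ≤ m := by exact_mod_cast hm
  have hn' : (1 : ℝ) ≤ n := by exact_mod_cast hn
  rw [mem_Ioo, one_div_lt_one_div (by linarith) (by linarith),
    one_div_lt_one_div (by linarith) (by linarith)]
  constructor
  · rintro ⟨hlo, hhi⟩
    have hle : m < n + 1 := by exact_mod_cast (by linarith : (m : ℝ) < n + 1)
    have hge : n < m + 1 := by exact_mod_cast (by linarith : (n : ℝ) < m + 1)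
    omega
  · rintro rfl
    constructor <;> linarith

lemma exists_one_div_natCast_eq_one_div_two_mul_iff {k : ℕ} :
    (∃ n : ℕ, 1 ≤ n ∧ 1 / (k : ℝ) = 1 / (2 * n)) ↔ Even k ∧ k ≠ 0 := by
  constructor
  · rintro ⟨n, hn, hkn⟩
    rw [one_div, one_div, inv_inj] at hkn
    have : k = 2 * n := by exact_mod_cast hkn
    exact ⟨⟨n, by omega⟩, by omega⟩
  · rintro ⟨⟨n, rfl⟩, hk⟩
    exact ⟨n, by omega, by push_cast; ring_nf⟩

-- `n = 0` is allowed: `1 / 0 = 0 ∈ Xset`.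
lemma one_div_natCast_mem_Xset (n : ℕ) : 1 / (n : ℝ) ∈ Xset := by
  rcases Nat.eq_zero_or_pos n with rfl | hn
  · exact Or.inl (by simp)
  · exact Or.inr ⟨n, hn, rfl⟩

namespace Xset

lemma zero_mem : (0 : ℝ) ∈ Xset := Or.inl rfl

noncomputable def recip (n : ℕ) : Xset := ⟨1 / n, one_div_natCast_mem_Xset n⟩

@[simp]
lemma coe_recip (n : ℕ) : (recip n : ℝ) = 1 / n := rfl

lemma coe_recip_ne_zero {n : ℕ} (hn : n ≠ 0) : (recip n : ℝ) ≠ 0 := by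
  simpa using hn

lemma isOpen_singleton {x : Xset} (hx : (x : ℝ) ≠ 0) : IsOpen ({x} : Set Xset) := by
  obtain ⟨n, hn, hxn⟩ := x.2.resolve_left hx
  suffices ({x} : Set Xset) =
      Subtype.val ⁻¹' Ioo (1 / ((n : ℝ) + 1 / 2)) (1 / ((n : ℝ) - 1 / 2)) from
    this ▸ isOpen_Ioo.preimage continuous_subtype_val
  ext ⟨y, hy⟩
  simp only [mem_singleton_iff, mem_preimage, Subtype.ext_iff, hxn]
  rcases hy with rfl | ⟨m, hm, rfl⟩
  · have : (0 : ℝ) < 1 / (n + 1 / 2) := by positivity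
    simp only [mem_Ioo, not_lt.2 this.le, false_and, iff_false]
    exact fun h => hx (hxn.trans h.symm)
  · rw [one_div_natCast_mem_Ioo_iff hm hn, one_div, one_div, inv_inj, Nat.cast_inj]

lemma continuous_of_continuousAt_zero {β : Type*} [TopologicalSpace β] {φ : Xset → β}
    (hφ : ContinuousAt φ ⟨0, zero_mem⟩) : Continuous φ := by
  refine continuous_iff_continuousAt.2 fun x => ?_
  by_cases hx : (x : ℝ) = 0
  · rwa [show x = ⟨0, zero_mem⟩ from Subtype.ext hx]
  · rw [ContinuousAt, (isOpen_singleton_iff_nhds_eq_pure x).1 (isOpen_singleton hx)]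
    exact tendsto_pure_nhds φ x

lemma tendsto_recip {α : Type*} {l : Filter α} {k : α → ℕ} (hk : Tendsto k l atTop) :
    Tendsto (fun a => recip (k a)) l (𝓝 ⟨0, zero_mem⟩) :=
  tendsto_subtype_rng.2 (tendsto_one_div_atTop_nhds_zero_nat.comp hk)

lemma apply_zero_eq_of_continuousAt {β : Type*} [TopologicalSpace β] [T2Space β]
    {φ : Xset → β} (hφ : ContinuousAt φ ⟨0, zero_mem⟩) {k : ℕ → ℕ}
    (hk : Tendsto k atTop atTop) {c : β} (hc : ∀ n, φ (recip (k n)) = c) :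
    φ ⟨0, zero_mem⟩ = c :=
  tendsto_nhds_unique (hφ.tendsto.comp (tendsto_recip hk)) (by simp [Function.comp_def, hc])

end Xset

lemma continuousAt_of_abs_le {α : Type*} [TopologicalSpace α] {φ ψ : α → ℝ} {a : α}
    (hψ : ContinuousAt ψ a) (hψa : ψ a = 0) (hle : ∀ x, |φ x| ≤ |ψ x|) :
    ContinuousAt φ a := by
  have hφa : φ a = 0 := abs_nonpos_iff.1 (by simpa [hψa] using hle a)
  rw [ContinuousAt, hφa]
  refine squeeze_zero_norm (fun x => hle x) ?_
  simpa [ContinuousAt, hψa] using hψ.abs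

theorem no_continuous_factorization
    (f g : Xset → ℝ)
    (hf : ∀ x : Xset, f x = if ∃ n : ℕ, 1 ≤ n ∧ (x : ℝ) = 1 / (2 * n) then (x : ℝ) else 0)
    (hg : ∀ x : Xset, g x = (x : ℝ)) :
    Continuous f ∧ Continuous g ∧ (∀ x : Xset, (f x) ^ 2 ≤ (g x) ^ 2) ∧
      ¬ ∃ h : Xset → ℂ, Continuous h ∧ ∀ x : Xset, (f x : ℂ) = h x * (g x : ℂ) := by
  have hfg : ∀ x, |f x| ≤ |g x| := fun x => by rw [hf, hg]; split_ifs <;> simp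
  have hgc : Continuous g := by rw [funext hg]; exact continuous_subtype_val
  refine ⟨Xset.continuous_of_continuousAt_zero
    (continuousAt_of_abs_le hgc.continuousAt (hg _) hfg), hgc, fun x => sq_le_sq.2 (hfg x), ?_⟩
  rintro ⟨h, hh, hfac⟩
  have h_eq_div : ∀ x : Xset, (x : ℝ) ≠ 0 → h x = f x / (x : ℝ) := fun x hx =>
    eq_div_of_mul_eq (by exact_mod_cast hx) (by rw [hfac, hg])
  have h_even (n : ℕ) : h (Xset.recip (2 * n + 2)) = 1 := by
    have hx := Xset.coe_recip_ne_zero (n := 2 * n + 2) (by omega)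
    rw [h_eq_div _ hx, hf, if_pos, div_self (by exact_mod_cast hx)]
    exact exists_one_div_natCast_eq_one_div_two_mul_iff.2 ⟨⟨n + 1, by omega⟩, by omega⟩
  have h_odd (n : ℕ) : h (Xset.recip (2 * n + 1)) = 0 := by
    rw [h_eq_div _ (Xset.coe_recip_ne_zero (by omega)), hf, if_neg, Complex.ofReal_zero, zero_div]
    exact fun hn =>
      Nat.not_even_two_mul_add_one n (exists_one_div_natCast_eq_one_div_two_mul_iff.1 hn).1
  have h_zero : ContinuousAt h ⟨0, Xset.zero_mem⟩ := hh.continuousAt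
  have h_zero_eq_one := Xset.apply_zero_eq_of_continuousAt h_zero
    (tendsto_atTop_mono (fun n => by dsimp; omega) tendsto_id) h_even
  have h_zero_eq_zero := Xset.apply_zero_eq_of_continuousAt h_zero
    (tendsto_atTop_mono (fun n => by dsimp; omega) tendsto_id) h_odd
  exact one_ne_zero (h_zero_eq_one.symm.trans h_zero_eq_zero)
end

section
/- Let X be a locally compact Hausdorff space such that C₀(X) has the weak polar decomposition property: for every f ∈ C₀(X) there exists v ∈ C₀(X) with f = v·|f|. Then for all f, g ∈ C₀(X) with |f|² ≤ |g|² pointwise, there exists h ∈ C₀(X) with f = h·g. -/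
open ZeroAtInfty

variable {X : Type*} [TopologicalSpace X] [LocallyCompactSpace X] [T2Space X]

/-!
Write `f = u |f|` and `g = v |g|`. The function `φ = |f| + i √(|g|² - |f|²)` lies in `C₀(X)` and
has `|φ| = |g|`, so a polar factor `w` of `φ` satisfies `|f| = Re φ = (Re w) |g|`. Since `|v| = 1`
wherever `g ≠ 0`, we have `|g| = v̄ g` everywhere, hence `f = (u · Re w · v̄) g`.
-/

namespace ZeroAtInftyContinuousMap

variable {α E F : Type*} [TopologicalSpace α] [SeminormedAddGroup E] [SeminormedAddGroup F]

def ofNormLE (φ : C(α, E)) (g : C₀(α, F)) (hφ : ∀ x, ‖φ x‖ ≤ ‖g x‖) : C₀(α, E) where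
  toContinuousMap := φ
  zero_at_infty' := squeeze_zero_norm hφ (tendsto_zero_iff_norm_tendsto_zero.mp g.zero_at_infty')

@[simp]
theorem coe_ofNormLE (φ : C(α, E)) (g : C₀(α, F)) (hφ : ∀ x, ‖φ x‖ ≤ ‖g x‖) :
    ⇑(ofNormLE φ g hφ) = φ :=
  rfl

theorem exists_coe_eq_re (w : C₀(α, ℂ)) : ∃ r : C₀(α, ℂ), ∀ x, r x = (w x).re :=
  ⟨ofNormLE ⟨fun x => ((w x).re : ℂ), by fun_prop⟩ w fun x => by
    simpa using Complex.abs_re_le_norm (w x), fun _ => rfl⟩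

theorem exists_re_eq_and_norm_eq (g : C₀(α, ℂ)) (a : α → ℝ) (ha : Continuous a)
    (hag : ∀ x, a x ^ 2 ≤ ‖g x‖ ^ 2) :
    ∃ φ : C₀(α, ℂ), ∀ x, (φ x).re = a x ∧ ‖φ x‖ = ‖g x‖ := by
  let b x := √(‖g x‖ ^ 2 - a x ^ 2)
  have hnorm x : ‖(a x : ℂ) + b x * Complex.I‖ = ‖g x‖ := by
    rw [Complex.norm_add_mul_I, Real.sq_sqrt (sub_nonneg.mpr (hag x)), add_sub_cancel,
      Real.sqrt_sq (norm_nonneg _)]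
  refine ⟨ofNormLE ⟨fun x => (a x : ℂ) + b x * Complex.I, by fun_prop⟩ g
    fun x => (hnorm x).le, fun x => ⟨by simp, hnorm x⟩⟩

end ZeroAtInftyContinuousMap

theorem Complex.star_mul_eq_norm_of_eq_mul_norm {z v : ℂ} (h : z = v * ‖z‖) :
    star v * z = ‖z‖ := by
  rcases eq_or_ne z 0 with rfl | hz
  · simp
  have hv : ‖v‖ = 1 := by
    have := congrArg norm h
    rw [norm_mul, Complex.norm_real, norm_norm] at this
    exact (mul_eq_right₀ (norm_ne_zero_iff.mpr hz)).mp this.symm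
  calc star v * z = star v * v * ‖z‖ := by rw [mul_assoc, ← h]
    _ = ‖z‖ := by rw [Complex.star_def, Complex.conj_mul', hv]; simp

theorem dfp_of_wpdp
    (hwpdp : ∀ f : C₀(X, ℂ), ∃ v : C₀(X, ℂ), ∀ x : X, f x = v x * (‖f x‖ : ℂ)) :
    ∀ f g : C₀(X, ℂ), (∀ x : X, ‖f x‖ ^ 2 ≤ ‖g x‖ ^ 2) →
      ∃ h : C₀(X, ℂ), ∀ x : X, f x = h x * g x := by
  intro f g hfg
  obtain ⟨u, hu⟩ := hwpdp f
  obtain ⟨v, hv⟩ := hwpdp g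
  obtain ⟨φ, hφ⟩ := ZeroAtInftyContinuousMap.exists_re_eq_and_norm_eq g (‖f ·‖) (by fun_prop) hfg
  obtain ⟨w, hw⟩ := hwpdp φ
  obtain ⟨r, hr⟩ := ZeroAtInftyContinuousMap.exists_coe_eq_re w
  refine ⟨u * r * star v, fun x => ?_⟩
  have hf : ‖f x‖ = (w x).re * ‖g x‖ := by
    simpa only [Complex.re_mul_ofReal, hφ x] using congrArg Complex.re (hw x)
  calc f x = u x * ‖f x‖ := hu x
    _ = u x * (w x).re * (star (v x) * g x) := by
      rw [Complex.star_mul_eq_norm_of_eq_mul_norm (hv x), hf]; push_cast; ring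
    _ = (u * r * star v) x * g x := by
      simp only [ZeroAtInftyContinuousMap.mul_apply, ZeroAtInftyContinuousMap.star_apply, hr]; ring
end

section
/- Let X be a locally compact Hausdorff space such that every f ∈ C₀(X) factors as f = v·|f| for some v ∈ C₀(X). Then X is sub-Stonean: any two disjoint open σ-compact subsets of X have disjoint compact closures. -/
open ZeroAtInfty Filter Set Function

/-!
Pick `f, g ∈ C₀(X, ℝ)`, nonnegative, whose supports are exactly `U` and `V`: an open σ-compact set
is the support of a weighted sum `∑ 2⁻ⁿ gₙ` of Urysohn functions for its compact pieces. Writing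
`f - g = v · |f - g|` forces `v = 1` on `U` and `v = -1` on `V`, hence on their closures. Since `v`
vanishes at infinity, its level sets `{v = 1}` and `{v = -1}` are compact, and they are disjoint.
-/

namespace ZeroAtInftyContinuousMap

variable {X : Type*} [TopologicalSpace X]

instance {E : Type*} [PseudoMetricSpace E] [Zero E] : ContinuousEvalConst C₀(X, E) X E :=
  .of_continuous_forget isometry_toBCF.continuous

theorem hasSum_apply {E ι : Type*} [SeminormedAddCommGroup E] {f : ι → C₀(X, E)} {g : C₀(X, E)}
    (h : HasSum f g) (x : X) : HasSum (fun i => f i x) (g x) :=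
  h.map ({ toFun := fun f => f x, map_zero' := rfl, map_add' := fun _ _ => rfl } : C₀(X, E) →+ E)
    (continuous_eval_const x)

theorem isCompact_preimage_singleton {E : Type*} [TopologicalSpace E] [T1Space E] [Zero E]
    (v : C₀(X, E)) {c : E} (hc : c ≠ 0) : IsCompact (v ⁻¹' {c}) := by
  obtain ⟨t, ht, hts⟩ := mem_cocompact.1 ((zero_at_infty v).eventually_ne hc.symm)
  exact ht.of_isClosed_subset (isClosed_singleton.preimage (map_continuous v))
    fun x hx => by_contra fun hxt => hts hxt hx

def postcomp {E F : Type*} [TopologicalSpace E] [Zero E] [TopologicalSpace F] [Zero F]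
    (φ : C(E, F)) (hφ : φ 0 = 0) (f : C₀(X, E)) : C₀(X, F) where
  toContinuousMap := φ.comp f
  zero_at_infty' := hφ ▸ (φ.continuous.tendsto 0).comp (zero_at_infty f)

theorem exists_nonneg_support_eq_iUnion (g : ℕ → C₀(X, ℝ)) (hg : ∀ n x, g n x ∈ Icc (0 : ℝ) 1) :
    ∃ F : C₀(X, ℝ), (∀ x, 0 ≤ F x) ∧ support F = ⋃ n, support (g n) := by
  have hg_norm (n : ℕ) : ‖g n‖ ≤ 1 := by
    rw [← norm_toBCF_eq_norm]
    exact (BoundedContinuousFunction.norm_le zero_le_one).2 fun x =>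
      (Real.norm_of_nonneg (hg n x).1).trans_le (hg n x).2
  have hsum : Summable fun n => ((1 : ℝ) / 2) ^ n • g n :=
    summable_geometric_two.of_norm_bounded fun n => by
      rw [norm_smul, Real.norm_of_nonneg (by positivity)]
      exact mul_le_of_le_one_right (by positivity) (hg_norm n)
  set F := ∑' n, ((1 : ℝ) / 2) ^ n • g n
  have hF (x : X) : HasSum (fun n => ((1 : ℝ) / 2) ^ n * g n x) (F x) :=
    hasSum_apply hsum.hasSum x
  have hterm (n : ℕ) (x : X) : 0 ≤ ((1 : ℝ) / 2) ^ n * g n x := by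
    have := (hg n x).1
    positivity
  refine ⟨F, fun x => (hF x).nonneg fun n => hterm n x, ?_⟩
  ext x
  simp only [mem_support, mem_iUnion]
  constructor
  · intro hx
    by_contra! hzero
    exact hx ((hF x).unique (by simp [hzero]))
  · rintro ⟨n, hn⟩
    have hpos : 0 < ((1 : ℝ) / 2) ^ n * g n x := by
      have := (hg n x).1.lt_of_ne' hn
      positivity
    exact (hpos.trans_le (le_hasSum (hF x) n fun m _ => hterm m x)).ne'

end ZeroAtInftyContinuousMap

theorem IsSigmaCompact.exists_zeroAtInfty_nonneg_support_eq {X : Type*} [TopologicalSpace X]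
    [RegularSpace X] [LocallyCompactSpace X] {U : Set X} (hσ : IsSigmaCompact U)
    (hU : IsOpen U) : ∃ f : C₀(X, ℝ), (∀ x, 0 ≤ f x) ∧ support f = U := by
  obtain ⟨K, hK, rfl⟩ := hσ
  have (n : ℕ) : ∃ g : C₀(X, ℝ), (∀ x, g x ∈ Icc (0 : ℝ) 1) ∧ EqOn g 1 (K n) ∧
      EqOn g 0 (⋃ n, K n)ᶜ := by
    obtain ⟨g, hgK, hgU, hgc, hg01⟩ := exists_continuous_one_zero_of_isCompact (hK n)
      hU.isClosed_compl (disjoint_compl_right.mono_left (subset_iUnion K n))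
    exact ⟨⟨g, hgc.is_zero_at_infty⟩, hg01, hgK, hgU⟩
  choose g hg01 hgK hgU using this
  obtain ⟨F, hF0, hF⟩ := ZeroAtInftyContinuousMap.exists_nonneg_support_eq_iUnion g hg01
  refine ⟨F, hF0, hF.trans (subset_antisymm (iUnion_subset fun n x hx => ?_)
    (iUnion_mono fun n x hx => ?_))⟩
  · by_contra hxU
    exact hx (hgU n hxU)
  · simp [hgK n hx]

theorem RCLike.eq_one_of_ofReal_eq_mul_norm {𝕜 : Type*} [RCLike 𝕜] {r : ℝ} {w : 𝕜} (hr : 0 < r)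
    (h : (r : 𝕜) = w * ‖(r : 𝕜)‖) : w = 1 := by
  rw [RCLike.norm_ofReal, abs_of_pos hr] at h
  exact (mul_eq_right₀ (RCLike.ofReal_ne_zero.2 hr.ne')).1 h.symm

theorem RCLike.eq_neg_one_of_ofReal_eq_mul_norm {𝕜 : Type*} [RCLike 𝕜] {r : ℝ} {w : 𝕜} (hr : r < 0)
    (h : (r : 𝕜) = w * ‖(r : 𝕜)‖) : w = -1 := by
  rw [RCLike.norm_ofReal, abs_of_neg hr] at h
  refine mul_right_cancel₀ (RCLike.ofReal_ne_zero.2 (neg_ne_zero.2 hr.ne)) (h.symm.trans ?_)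
  push_cast
  ring

variable {X : Type*} [TopologicalSpace X] [LocallyCompactSpace X] [T2Space X]

theorem subStonean_of_wpdp
    (hwpdp : ∀ f : C₀(X, ℂ), ∃ v : C₀(X, ℂ), ∀ x : X, f x = v x * (‖f x‖ : ℂ)) :
    ∀ U V : Set X, IsOpen U → IsOpen V → IsSigmaCompact U → IsSigmaCompact V →
      Disjoint U V →
      IsCompact (closure U) ∧ IsCompact (closure V) ∧ Disjoint (closure U) (closure V) := by
  intro U V hUo hVo hUσ hVσ hUV
  obtain ⟨f, hf0, hfU⟩ := hUσ.exists_zeroAtInfty_nonneg_support_eq hUo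
  obtain ⟨g, hg0, hgV⟩ := hVσ.exists_zeroAtInfty_nonneg_support_eq hVo
  obtain ⟨v, hv⟩ := hwpdp ((f - g).postcomp ⟨Complex.ofReal, Complex.continuous_ofReal⟩ rfl)
  have hvU : ∀ x ∈ U, v x = 1 := fun x hx => by
    have hfx : 0 < f x := (hf0 x).lt_of_ne' (mem_support.1 (hfU ▸ hx))
    have hgx : g x = 0 := notMem_support.1 (hgV ▸ hUV.notMem_of_mem_left hx)
    exact RCLike.eq_one_of_ofReal_eq_mul_norm (by simpa [hgx]) (hv x)
  have hvV : ∀ x ∈ V, v x = -1 := fun x hx => by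
    have hgx : 0 < g x := (hg0 x).lt_of_ne' (mem_support.1 (hgV ▸ hx))
    have hfx : f x = 0 := notMem_support.1 (hfU ▸ hUV.notMem_of_mem_right hx)
    exact RCLike.eq_neg_one_of_ofReal_eq_mul_norm (by simpa [hfx]) (hv x)
  have hclU : closure U ⊆ v ⁻¹' {1} :=
    closure_minimal hvU (isClosed_singleton.preimage (map_continuous v))
  have hclV : closure V ⊆ v ⁻¹' {-1} :=
    closure_minimal hvV (isClosed_singleton.preimage (map_continuous v))
  refine ⟨(v.isCompact_preimage_singleton one_ne_zero).of_isClosed_subset isClosed_closure hclU,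
    (v.isCompact_preimage_singleton (by norm_num)).of_isClosed_subset isClosed_closure hclV, ?_⟩
  exact ((disjoint_singleton.2 (by norm_num)).preimage v).mono hclU hclV
end
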